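/- arXiv:1404.1296 — 2 statements merged into one kernel-verified Lean document; each statement's English description precedes it below -/
import Mathlib

section
/- Let (H,α) be a monoidal Hom-Hopf algebra over a commutative ring k and let g◁h := (S(h₁)α⁻¹(g))α(h₂) be the right adjoint Hom-action. Then ad_R turns (H,α) into a right H-module Hom-algebra: for all g,h,l ∈ H, (gh)◁l = (g◁l₁)(h◁l₂) and 1◁h = ε(h)1. -/
open TensorProduct

noncomputable def tmul2 {k A B C D E F : Type*} [CommRing k]
    [AddCommGroup A] [AddCommGroup B] [AddCommGroup C] [AddCommGroup D]
    [AddCommGroup E] [AddCommGroup F]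
    [Module k A] [Module k B] [Module k C] [Module k D] [Module k E] [Module k F]
    (f : A →ₗ[k] C →ₗ[k] E) (g : B →ₗ[k] D →ₗ[k] F) :
    (A ⊗[k] B) →ₗ[k] (C ⊗[k] D) →ₗ[k] (E ⊗[k] F) :=
  TensorProduct.curry
    ((TensorProduct.map (TensorProduct.lift f) (TensorProduct.lift g)) ∘ₗ
      (TensorProduct.tensorTensorTensorComm k A B C D).toLinearMap)

/-- A monoidal Hom-Hopf algebra over a commutative ring `k`. -/
structure MonHomHopf (k H : Type*) [CommRing k] [AddCommGroup H] [Module k H] where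
  α : H ≃ₗ[k] H
  mul : H →ₗ[k] H →ₗ[k] H
  one : H
  comul : H →ₗ[k] H ⊗[k] H
  counit : H →ₗ[k] k
  S : H →ₗ[k] H
  alpha_mul : ∀ g h, α (mul g h) = mul (α g) (α h)
  alpha_one : α one = one
  hom_assoc : ∀ g h l, mul (α g) (mul h l) = mul (mul g h) (α l)
  mul_one' : ∀ h, mul h one = α h
  one_mul' : ∀ h, mul one h = α h
  comul_alpha : ∀ h, comul (α h)
    = TensorProduct.map α.toLinearMap α.toLinearMap (comul h)
  counit_alpha : ∀ h, counit (α h) = counit h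
  hom_coassoc : ∀ h,
    (TensorProduct.assoc k H H H) ((TensorProduct.map comul α.symm.toLinearMap) (comul h))
      = (TensorProduct.map α.symm.toLinearMap comul) (comul h)
  counit_comul_left : ∀ h,
    (TensorProduct.lid k H) ((TensorProduct.map counit LinearMap.id) (comul h)) = α.symm h
  counit_comul_right : ∀ h,
    (TensorProduct.rid k H) ((TensorProduct.map LinearMap.id counit) (comul h)) = α.symm h
  comul_mul : ∀ g h, comul (mul g h) = tmul2 mul mul (comul g) (comul h)
  comul_one : comul one = one ⊗ₜ[k] one
  counit_mul : ∀ g h, counit (mul g h) = counit g * counit h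
  counit_one : counit one = 1
  antipode_left : ∀ h,
    (TensorProduct.lift mul) ((TensorProduct.map S LinearMap.id) (comul h)) = counit h • one
  antipode_right : ∀ h,
    (TensorProduct.lift mul) ((TensorProduct.map LinearMap.id S) (comul h)) = counit h • one
  S_alpha : ∀ h, S (α h) = α (S h)

/-- The right adjoint Hom-action `g ◁ h = (S(h₁) α⁻¹(g)) α(h₂)`, as a linear map in `h`. -/
noncomputable def MonHomHopf.adRL {k H : Type*} [CommRing k] [AddCommGroup H] [Module k H]
    (A : MonHomHopf k H) (g : H) : H →ₗ[k] H :=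
  (TensorProduct.lift
    ((A.mul.comp ((A.mul.flip (A.α.symm g)).comp A.S)).compl₂ A.α.toLinearMap)) ∘ₗ A.comul

/-!
Write `g ◁ (a ⊗ b) = (S(a) α⁻¹(g)) α(b)`, so that `g ◁ l = g ◁ Δ(l)`. Both sides of the
multiplicativity identity equal `(S(l₁) g)(h l₂)`. For `(g h) ◁ l` this is Hom-associativity
alone. For `(g ◁ l₁)(h ◁ l₂)`, Hom-coassociativity, used once in each direction, puts the inner
factors `α(l₁₂)` and `S(l₂₁)` into a single coproduct, where the antipode collapses them to a
counit, which the counit axiom then absorbs. The unit identity is the antipode axiom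
`S(h₁)h₂ = ε(h)1`.
-/

namespace MonHomHopf

variable {k H : Type*} [CommRing k] [AddCommGroup H] [Module k H] (A : MonHomHopf k H)

theorem alpha_symm_one : A.α.symm A.one = A.one :=
  A.α.symm_apply_eq.2 A.alpha_one.symm

theorem alpha_symm_mul (x y : H) : A.α.symm (A.mul x y) = A.mul (A.α.symm x) (A.α.symm y) :=
  A.α.symm_apply_eq.2 (by rw [A.alpha_mul, A.α.apply_symm_apply, A.α.apply_symm_apply])

theorem mul_mul_mul (p q r s : H) :
    A.mul (A.mul p q) (A.mul r s)
      = A.mul (A.α p) (A.mul (A.mul (A.α.symm q) (A.α.symm r)) s) := by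
  have hq : A.mul q (A.mul (A.α.symm r) (A.α.symm s))
      = A.mul (A.mul (A.α.symm q) (A.α.symm r)) s := by
    simpa using A.hom_assoc (A.α.symm q) (A.α.symm r) (A.α.symm s)
  calc A.mul (A.mul p q) (A.mul r s)
      = A.mul (A.mul p q) (A.α (A.mul (A.α.symm r) (A.α.symm s))) := by
        rw [A.alpha_mul, A.α.apply_symm_apply, A.α.apply_symm_apply]
    _ = A.mul (A.α p) (A.mul (A.mul (A.α.symm q) (A.α.symm r)) s) := by
        rw [← A.hom_assoc, hq]

-- In Sweedler notation: `Σ Φ(l₁₁, l₁₂, l₂) = Σ Φ(α⁻¹(l₁), l₂₁, α(l₂₂))`.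
theorem hom_coassoc_apply {M : Type*} [AddCommGroup M] [Module k M]
    (Φ : (H ⊗[k] H) ⊗[k] H →ₗ[k] M) (Ψ : H ⊗[k] (H ⊗[k] H) →ₗ[k] M)
    (hΦΨ : ∀ a b c, Ψ (a ⊗ₜ (b ⊗ₜ c)) = Φ ((A.α.symm a ⊗ₜ b) ⊗ₜ A.α c)) (l : H) :
    Φ (map A.comul LinearMap.id (A.comul l)) = Ψ (map LinearMap.id A.comul (A.comul l)) := by
  have hΦ : Φ ∘ₗ map LinearMap.id A.α.toLinearMap ∘ₗ (TensorProduct.assoc k H H H).symm.toLinearMap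
      = Ψ ∘ₗ map A.α.toLinearMap LinearMap.id := by
    refine TensorProduct.ext_threefold' fun a b c => ?_
    simp [hΦΨ]
  have hl : map A.comul LinearMap.id (A.comul l) = map LinearMap.id A.α.toLinearMap
      ((TensorProduct.assoc k H H H).symm (map A.α.symm.toLinearMap A.comul (A.comul l))) := by
    rw [← A.hom_coassoc, LinearEquiv.symm_apply_apply, map_map]
    simp
  have hr : map LinearMap.id A.comul (A.comul l)
      = map A.α.toLinearMap LinearMap.id (map A.α.symm.toLinearMap A.comul (A.comul l)) := by
    rw [map_map]
    simp
  rw [hl, hr]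
  exact LinearMap.congr_fun hΦ _

theorem antipode_right_apply (x y : H) (Φ : H ⊗[k] H →ₗ[k] H)
    (hΦ : ∀ a b, Φ (a ⊗ₜ b) = A.mul (A.mul x (A.α (A.α a))) (A.mul (A.S (A.α (A.α b))) y))
    (m : H) : Φ (A.comul m) = A.counit m • A.mul (A.α x) (A.α y) := by
  have : Φ = (A.mul (A.α x) ∘ₗ A.mul.flip y ∘ₗ A.α.toLinearMap) ∘ₗ
      lift A.mul ∘ₗ map LinearMap.id A.S := by
    refine TensorProduct.ext' fun a b => ?_
    simp [hΦ, mul_mul_mul, A.S_alpha, A.alpha_mul]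
  simp only [this, LinearMap.comp_apply, A.antipode_right]
  simp [A.alpha_one, A.one_mul']

theorem lid_map_counit_comul {M : Type*} [AddCommGroup M] [Module k M] (φ : H →ₗ[k] M)
    (l : H) : TensorProduct.lid k M (map A.counit φ (A.comul l)) = φ (A.α.symm l) := by
  have : (TensorProduct.lid k M).toLinearMap ∘ₗ map A.counit φ
      = φ ∘ₗ (TensorProduct.lid k H).toLinearMap ∘ₗ map A.counit LinearMap.id :=
    TensorProduct.ext' fun a b => by simp
  rw [← A.counit_comul_left]
  exact LinearMap.congr_fun this _

def adRLTensor (g : H) : H ⊗[k] H →ₗ[k] H :=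
  lift ((A.mul.comp ((A.mul.flip (A.α.symm g)).comp A.S)).compl₂ A.α.toLinearMap)

@[simp]
theorem adRLTensor_tmul (g a b : H) :
    A.adRLTensor g (a ⊗ₜ b) = A.mul (A.mul (A.S a) (A.α.symm g)) (A.α b) :=
  rfl

theorem adRL_apply (g l : H) : A.adRL g l = A.adRLTensor g (A.comul l) :=
  rfl

theorem adRL_alpha (g l : H) :
    A.adRL g (A.α l) = A.adRLTensor g (map A.α.toLinearMap A.α.toLinearMap (A.comul l)) := by
  rw [adRL_apply, A.comul_alpha]

theorem mul_adRL_alpha_apply (x h : H) (Φ : H ⊗[k] H →ₗ[k] H)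
    (hΦ : ∀ a b, Φ (a ⊗ₜ b) = A.mul (A.mul x (A.α a)) (A.adRL h (A.α b))) (n : H) :
    Φ (A.comul n) = A.mul (A.α x) (A.mul h n) := by
  let Ψ : H ⊗[k] (H ⊗[k] H) →ₗ[k] H := lift (A.mul.compl₂ (A.adRLTensor h)) ∘ₗ
    map (A.mul x ∘ₗ A.α.toLinearMap) (map A.α.toLinearMap A.α.toLinearMap)
  let Φ' : (H ⊗[k] H) ⊗[k] H →ₗ[k] H := Ψ ∘ₗ (TensorProduct.assoc k H H H).toLinearMap ∘ₗ
    map (map A.α.toLinearMap LinearMap.id) A.α.symm.toLinearMap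
  have hΨ : Φ = Ψ ∘ₗ map LinearMap.id A.comul :=
    TensorProduct.ext' fun a b => by simp [Ψ, hΦ, adRL_alpha]
  have hΦ' : Φ' ∘ₗ map A.comul LinearMap.id = (TensorProduct.lid k H).toLinearMap ∘ₗ
      map A.counit (A.mul (A.α x) ∘ₗ A.α.toLinearMap ∘ₗ A.mul (A.α.symm h)) := by
    refine TensorProduct.ext' fun a c => ?_
    have := A.antipode_right_apply x (A.mul (A.α.symm h) c)
      (Φ' ∘ₗ (TensorProduct.mk k (H ⊗[k] H) H).flip c)
      (fun a b => by simp [Φ', Ψ, ← A.hom_assoc, A.S_alpha]) a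
    simpa using this
  calc Φ (A.comul n) = Ψ (map LinearMap.id A.comul (A.comul n)) := by rw [hΨ]; rfl
    _ = Φ' (map A.comul LinearMap.id (A.comul n)) :=
        (A.hom_coassoc_apply Φ' Ψ (fun a b c => by simp [Φ']) n).symm
    _ = A.mul (A.α x) (A.mul h n) := by
        rw [← LinearMap.comp_apply Φ', hΦ', LinearMap.comp_apply, LinearEquiv.coe_coe,
          lid_map_counit_comul]
        simp [A.alpha_mul]

theorem adRL_mul (g h l : H) :
    A.adRL (A.mul g h) l
      = lift ((A.mul ∘ₗ A.mul.flip g ∘ₗ A.S).compl₂ (A.mul h)) (A.comul l) := by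
  rw [adRL_apply]
  congr 1
  refine TensorProduct.ext' fun a b => ?_
  simp [mul_mul_mul, alpha_symm_mul, ← A.hom_assoc]

theorem lift_mul_adRL_adRL (g h l : H) :
    lift ((A.mul.comp (A.adRL g)).compl₂ (A.adRL h)) (A.comul l)
      = lift ((A.mul ∘ₗ A.mul.flip g ∘ₗ A.S).compl₂ (A.mul h)) (A.comul l) := by
  let Φ : (H ⊗[k] H) ⊗[k] H →ₗ[k] H :=
    lift (A.mul.compl₂ (A.adRL h)) ∘ₗ map (A.adRLTensor g) LinearMap.id
  let Ψ : H ⊗[k] (H ⊗[k] H) →ₗ[k] H := Φ ∘ₗ map (map A.α.symm.toLinearMap LinearMap.id)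
    A.α.toLinearMap ∘ₗ (TensorProduct.assoc k H H H).symm.toLinearMap
  have hΦ : lift ((A.mul.comp (A.adRL g)).compl₂ (A.adRL h)) = Φ ∘ₗ map A.comul LinearMap.id :=
    TensorProduct.ext' fun a b => by simp [Φ, adRL_apply]
  have hΨ : Ψ ∘ₗ map LinearMap.id A.comul
      = lift ((A.mul ∘ₗ A.mul.flip g ∘ₗ A.S).compl₂ (A.mul h)) := by
    refine TensorProduct.ext' fun a n => ?_
    have := A.mul_adRL_alpha_apply (A.mul (A.S (A.α.symm a)) (A.α.symm g)) h
      (Ψ ∘ₗ TensorProduct.mk k H (H ⊗[k] H) a) (fun b c => by simp [Ψ, Φ]) n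
    simpa [A.alpha_mul, ← A.S_alpha] using this
  rw [hΦ, ← hΨ]
  exact A.hom_coassoc_apply Φ Ψ (fun a b c => by simp [Ψ]) l

theorem adRL_one (h : H) : A.adRL A.one h = A.counit h • A.one := by
  have : A.adRLTensor A.one = A.α.toLinearMap ∘ₗ lift A.mul ∘ₗ map A.S LinearMap.id :=
    TensorProduct.ext' fun a b => by simp [alpha_symm_one, A.mul_one', A.alpha_mul]
  simp only [adRL_apply, this, LinearMap.comp_apply, A.antipode_left]
  simp [A.alpha_one]

end MonHomHopf

/-- the right adjoint Hom-action makes `(H,α)` a right `H`-module Hom-algebra: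
`(g h) ◁ l = (g ◁ l₁)(h ◁ l₂)` and `1 ◁ h = ε(h) 1`. -/
theorem right_adjoint_action_module_algebra {k H : Type*} [CommRing k] [AddCommGroup H]
    [Module k H] (A : MonHomHopf k H) :
    (∀ g h l, A.adRL (A.mul g h) l
      = TensorProduct.lift ((A.mul.comp (A.adRL g)).compl₂ (A.adRL h)) (A.comul l)) ∧
    (∀ h, A.adRL A.one h = A.counit h • A.one) :=
  ⟨fun g h l => (A.adRL_mul g h l).trans (A.lift_mul_adRL_adRL g h l).symm, A.adRL_one⟩
end

section
/- Let (H,α) be a monoidal Hom-Hopf algebra over a commutative ring k and let (N,ν) be a right (H,α)-Hom-module with action (n,h)↦n◁h. Then the k-module H⊗N with bijection α⊗ν, left action h·(g⊗n) := α⁻¹(h)g⊗ν(n), right action (g⊗n)·h := gh₁⊗(n◁h₂), and left coaction ρ(g⊗n) := α(g₁)⊗(g₂⊗ν⁻¹(n)) is a left-covariant (H,α)-Hom-bimodule: the left and right action axioms, the bimodule compatibility, the Hom-coassociativity and Hom-counity of ρ, and the left-covariance condition ρ((h·x)·α(g)) = α(h₁)(x₍₋₁₎g₁)⊗α(h₂)·(x₍₀₎·g₂)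 all hold. -/
open TensorProduct

/-- A left-covariant `(H,α)`-Hom-bimodule. -/
structure LeftCovBimod {k H : Type*} [CommRing k] [AddCommGroup H] [Module k H]
    (A : MonHomHopf k H) (M : Type*) [AddCommGroup M] [Module k M] where
  μ : M ≃ₗ[k] M
  lact : H →ₗ[k] M →ₗ[k] M
  ract : M →ₗ[k] H →ₗ[k] M
  lact_assoc : ∀ g h m, lact (A.α g) (lact h m) = lact (A.mul g h) (μ m)
  lact_one : ∀ m, lact A.one m = μ m
  mu_lact : ∀ h m, μ (lact h m) = lact (A.α h) (μ m)
  ract_assoc : ∀ m g h, ract (μ m) (A.mul g h) = ract (ract m g) (A.α h)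
  ract_one : ∀ m, ract m A.one = μ m
  mu_ract : ∀ m h, μ (ract m h) = ract (μ m) (A.α h)
  bimod : ∀ h m g, ract (lact h m) (A.α g) = lact (A.α h) (ract m g)
  rho : M →ₗ[k] H ⊗[k] M
  rho_coassoc : ∀ m,
    (TensorProduct.map (LinearMap.id : H →ₗ[k] H) rho) (rho m)
      = (TensorProduct.assoc k H H M)
          ((TensorProduct.map
              ((TensorProduct.map A.α.toLinearMap (LinearMap.id : H →ₗ[k] H)) ∘ₗ A.comul)
              μ.symm.toLinearMap) (rho m))
  rho_counit : ∀ m,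
    (TensorProduct.lid k M) ((TensorProduct.map A.counit (LinearMap.id : M →ₗ[k] M)) (rho m))
      = μ.symm m
  rho_mu : ∀ m, rho (μ m) = TensorProduct.map A.α.toLinearMap μ.toLinearMap (rho m)
  rho_cov : ∀ h g m,
    rho (ract (lact h m) (A.α g))
      = tmul2 A.mul lact (A.comul (A.α h)) (tmul2 A.mul ract (rho m) (A.comul g))

/-- A right `(H,α)`-Hom-module. -/
structure RightHomMod {k H : Type*} [CommRing k] [AddCommGroup H] [Module k H]
    (A : MonHomHopf k H) (N : Type*) [AddCommGroup N] [Module k N] where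
  ν : N ≃ₗ[k] N
  act : N →ₗ[k] H →ₗ[k] N
  act_assoc : ∀ n g h, act (ν n) (A.mul g h) = act (act n g) (A.α h)
  act_one : ∀ n, act n A.one = ν n
  nu_act : ∀ n h, ν (act n h) = act (ν n) (A.α h)

/-- Left action `h · (g ⊗ n) = α⁻¹(h) g ⊗ ν(n)` on `H ⊗ N`. -/
noncomputable def freeLact {k H N : Type*} [CommRing k] [AddCommGroup H] [Module k H]
    [AddCommGroup N] [Module k N] (A : MonHomHopf k H) (ν : N ≃ₗ[k] N) :
    H →ₗ[k] (H ⊗[k] N) →ₗ[k] (H ⊗[k] N) :=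
  TensorProduct.curry
    ((TensorProduct.map (TensorProduct.lift (A.mul.comp A.α.symm.toLinearMap)) ν.toLinearMap) ∘ₗ
      (TensorProduct.assoc k H H N).symm.toLinearMap)

/-- Right action `(g ⊗ n) · h = g h₁ ⊗ (n ◁ h₂)` on `H ⊗ N`. -/
noncomputable def freeRact {k H N : Type*} [CommRing k] [AddCommGroup H] [Module k H]
    [AddCommGroup N] [Module k N] (A : MonHomHopf k H) (act : N →ₗ[k] H →ₗ[k] N) :
    (H ⊗[k] N) →ₗ[k] H →ₗ[k] (H ⊗[k] N) :=
  (tmul2 A.mul act).compl₂ A.comul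

/-- Left coaction `ρ(g ⊗ n) = α(g₁) ⊗ (g₂ ⊗ ν⁻¹(n))` on `H ⊗ N`. -/
noncomputable def freeRho {k H N : Type*} [CommRing k] [AddCommGroup H] [Module k H]
    [AddCommGroup N] [Module k N] (A : MonHomHopf k H) (ν : N ≃ₗ[k] N) :
    (H ⊗[k] N) →ₗ[k] H ⊗[k] (H ⊗[k] N) :=
  (TensorProduct.assoc k H H N).toLinearMap ∘ₗ
    (TensorProduct.map
      ((TensorProduct.map A.α.toLinearMap (LinearMap.id : H →ₗ[k] H)) ∘ₗ A.comul)
      ν.symm.toLinearMap)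


section Aux

variable {k : Type*} [CommRing k]

@[simp] lemma tmul2_tmul {A B C D E F : Type*}
    [AddCommGroup A] [AddCommGroup B] [AddCommGroup C] [AddCommGroup D]
    [AddCommGroup E] [AddCommGroup F]
    [Module k A] [Module k B] [Module k C] [Module k D] [Module k E] [Module k F]
    (f : A →ₗ[k] C →ₗ[k] E) (g : B →ₗ[k] D →ₗ[k] F)
    (a : A) (b : B) (c : C) (d : D) :
    tmul2 f g (a ⊗ₜ[k] b) (c ⊗ₜ[k] d) = f a c ⊗ₜ[k] g b d := by
  simp [tmul2]

end Aux

section Main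

variable {k H N : Type*} [CommRing k] [AddCommGroup H] [Module k H]
  [AddCommGroup N] [Module k N] (A : MonHomHopf k H)

lemma alpha_symm_one : A.α.symm A.one = A.one := by
  conv_lhs => rw [← A.alpha_one]
  exact A.α.symm_apply_apply _

lemma alpha_symm_mul (g h : H) :
    A.α.symm (A.mul g h) = A.mul (A.α.symm g) (A.α.symm h) := by
  apply A.α.injective
  rw [A.alpha_mul]
  simp

lemma map_symm_symm (x : H ⊗[k] H) :
    TensorProduct.map A.α.symm.toLinearMap A.α.symm.toLinearMap
      (TensorProduct.map A.α.toLinearMap A.α.toLinearMap x) = x := by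
  rw [← LinearMap.comp_apply, ← TensorProduct.map_comp]
  have h1 : A.α.symm.toLinearMap ∘ₗ A.α.toLinearMap = LinearMap.id := by ext; simp
  rw [h1, TensorProduct.map_id, LinearMap.id_apply]

lemma comul_alpha_symm (h : H) :
    A.comul (A.α.symm h) =
      TensorProduct.map A.α.symm.toLinearMap A.α.symm.toLinearMap (A.comul h) := by
  conv_rhs => rw [← A.α.apply_symm_apply h, A.comul_alpha, map_symm_symm]

@[simp] lemma freeLact_tmul (ν : N ≃ₗ[k] N) (h x : H) (n : N) :
    freeLact A ν h (x ⊗ₜ[k] n) = A.mul (A.α.symm h) x ⊗ₜ[k] ν n := by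
  simp [freeLact]

lemma freeRact_apply (act : N →ₗ[k] H →ₗ[k] N) (m : H ⊗[k] N) (h : H) :
    freeRact A act m h = tmul2 A.mul act m (A.comul h) := rfl

lemma freeRho_tmul (ν : N ≃ₗ[k] N) (x : H) (n : N) :
    freeRho A ν (x ⊗ₜ[k] n) =
      TensorProduct.map A.α.toLinearMap ((TensorProduct.mk k H N).flip (ν.symm n))
        (A.comul x) := by
  simp only [freeRho, LinearMap.comp_apply, LinearEquiv.coe_coe, TensorProduct.map_tmul]
  generalize A.comul x = c
  induction c using TensorProduct.induction_on with
  | zero => simp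
  | tmul a b => simp
  | add u v hu hv => simp only [map_add, add_tmul, hu, hv]

end Main

section Psi

variable {k H N : Type*} [CommRing k] [AddCommGroup H] [Module k H]
  [AddCommGroup N] [Module k N]

/-- auxiliary pairing used in the covariance proof -/
noncomputable def psiW (A : MonHomHopf k H) : (H ⊗[k] H) →ₗ[k] (H ⊗[k] H) →ₗ[k] H ⊗[k] H :=
  tmul2 (A.mul.compl₂ (A.α.toLinearMap ∘ₗ A.α.toLinearMap)) (A.mul.compl₂ A.α.toLinearMap)

/-- auxiliary map used in the covariance proof -/
noncomputable def psi (A : MonHomHopf k H) (act : N →ₗ[k] H →ₗ[k] N) (w : H ⊗[k] H) (n : N) :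
    (H ⊗[k] (H ⊗[k] H)) →ₗ[k] H ⊗[k] (H ⊗[k] N) :=
  (TensorProduct.assoc k H H N).toLinearMap ∘ₗ
    (TensorProduct.map (psiW A w) ((act n) ∘ₗ A.α.toLinearMap)) ∘ₗ
    (TensorProduct.assoc k H H H).symm.toLinearMap

variable (A : MonHomHopf k H) (act : N →ₗ[k] H →ₗ[k] N)

lemma psi_add (w w' : H ⊗[k] H) (n : N) (t : H ⊗[k] (H ⊗[k] H)) :
    psi A act (w + w') n t = psi A act w n t + psi A act w' n t := by
  simp [psi, psiW, map_add, TensorProduct.map_add_left, LinearMap.add_apply]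

lemma psi_zero (n : N) (t : H ⊗[k] (H ⊗[k] H)) :
    psi A act 0 n t = 0 := by
  simp [psi, psiW, map_zero, TensorProduct.map_zero_left]

@[simp] lemma psi_tmul (w1 w2 : H) (n : N) (a b c : H) :
    psi A act (w1 ⊗ₜ[k] w2) n (a ⊗ₜ[k] (b ⊗ₜ[k] c)) =
      A.mul w1 (A.α (A.α a)) ⊗ₜ[k] (A.mul w2 (A.α b) ⊗ₜ[k] act n (A.α c)) := by
  simp [psi, psiW]

end Psi

section Fields

variable {k H N : Type*} [CommRing k] [AddCommGroup H] [Module k H]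
  [AddCommGroup N] [Module k N] (A : MonHomHopf k H) (R : RightHomMod A N)

@[simp] lemma nu_symm_act (n : N) (v : H) :
    R.ν.symm (R.act (R.ν n) (A.α v)) = R.act n v := by
  rw [← R.nu_act]
  exact R.ν.symm_apply_apply _

lemma subclaimL (n : N) (ch cx cu : H ⊗[k] H) (v : H) :
    TensorProduct.map A.α.toLinearMap ((TensorProduct.mk k H N).flip (R.act n v))
      (tmul2 A.mul A.mul
        (tmul2 A.mul A.mul
          (TensorProduct.map A.α.symm.toLinearMap A.α.symm.toLinearMap ch) cx)
        (TensorProduct.map A.α.toLinearMap A.α.toLinearMap cu))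
    = psi A R.act
        (tmul2 (A.mul.compl₂ A.α.toLinearMap) (A.mul ∘ₗ A.α.symm.toLinearMap) ch cx) n
        ((TensorProduct.assoc k H H H) (cu ⊗ₜ[k] A.α.symm v)) := by
  induction ch using TensorProduct.induction_on with
  | zero => simp [psi_zero]
  | add c1 c2 h1 h2 => simp only [map_add, LinearMap.add_apply, psi_add, h1, h2]
  | tmul s t =>
    induction cx using TensorProduct.induction_on with
    | zero => simp [psi_zero]
    | add c1 c2 h1 h2 => simp only [map_add, LinearMap.add_apply, psi_add, h1, h2]
    | tmul p q =>
      induction cu using TensorProduct.induction_on with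
      | zero => simp
      | add c1 c2 h1 h2 => simp only [map_add, LinearMap.add_apply, add_tmul, h1, h2]
      | tmul a b =>
        simp only [TensorProduct.map_tmul, tmul2_tmul, LinearEquiv.coe_coe,
          TensorProduct.assoc_tmul, psi_tmul, LinearMap.compl₂_apply, LinearMap.comp_apply,
          TensorProduct.mk_apply, LinearMap.flip_apply, LinearEquiv.apply_symm_apply]
        rw [A.alpha_mul, A.alpha_mul]
        simp [LinearEquiv.apply_symm_apply]

lemma subclaimR (n : N) (ch cx cg : H ⊗[k] H) :
    tmul2 A.mul (freeLact A R.ν)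
      (TensorProduct.map A.α.toLinearMap A.α.toLinearMap ch)
      (tmul2 A.mul (freeRact A R.act)
        (TensorProduct.map A.α.toLinearMap ((TensorProduct.mk k H N).flip (R.ν.symm n)) cx)
        cg)
    = psi A R.act
        (tmul2 (A.mul.compl₂ A.α.toLinearMap) (A.mul ∘ₗ A.α.symm.toLinearMap) ch cx) n
        (TensorProduct.map A.α.symm.toLinearMap A.comul cg) := by
  induction ch using TensorProduct.induction_on with
  | zero => simp [psi_zero]
  | add c1 c2 h1 h2 => simp only [map_add, LinearMap.add_apply, psi_add, h1, h2]
  | tmul s t =>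
    induction cx using TensorProduct.induction_on with
    | zero => simp [psi_zero]
    | add c1 c2 h1 h2 => simp only [map_add, LinearMap.add_apply, psi_add, h1, h2]
    | tmul p q =>
      induction cg using TensorProduct.induction_on with
      | zero => simp
      | add c1 c2 h1 h2 => simp only [map_add, LinearMap.add_apply, h1, h2]
      | tmul u v =>
        simp only [TensorProduct.map_tmul, tmul2_tmul, LinearEquiv.coe_coe,
          TensorProduct.mk_apply, LinearMap.flip_apply, freeRact_apply]
        generalize A.comul v = cv
        induction cv using TensorProduct.induction_on with
        | zero => simp
        | add c1 c2 h1 h2 => simp only [map_add, tmul_add, h1, h2]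
        | tmul v1 v2 =>
          simp only [tmul2_tmul, freeLact_tmul, psi_tmul, LinearMap.compl₂_apply,
            LinearMap.comp_apply, LinearEquiv.coe_coe, LinearEquiv.apply_symm_apply,
            LinearEquiv.symm_apply_apply]
          rw [A.hom_assoc s (A.α p) u]
          have h3 : R.ν (R.act (R.ν.symm n) v2) = R.act n (A.α v2) := by
            rw [R.nu_act, R.ν.apply_symm_apply]
          have h4 : A.mul t (A.mul q v1) = A.mul (A.mul (A.α.symm t) q) (A.α v1) := by
            conv_lhs => rw [← A.α.apply_symm_apply t]
            exact A.hom_assoc _ q v1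
          rw [h3, h4]

end Fields

section Fields2

variable {k H N : Type*} [CommRing k] [AddCommGroup H] [Module k H]
  [AddCommGroup N] [Module k N] (A : MonHomHopf k H) (R : RightHomMod A N)

lemma L_rho_cov (h g : H) (m : H ⊗[k] N) :
    freeRho A R.ν (freeRact A R.act (freeLact A R.ν h m) (A.α g))
      = tmul2 A.mul (freeLact A R.ν) (A.comul (A.α h))
          (tmul2 A.mul (freeRact A R.act) (freeRho A R.ν m) (A.comul g)) := by
  induction m using TensorProduct.induction_on with
  | zero => simp [freeRact_apply]
  | add m1 m2 h1 h2 => simp only [map_add, LinearMap.add_apply, h1, h2]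
  | tmul x n =>
    rw [freeLact_tmul, freeRact_apply, A.comul_alpha g, freeRho_tmul, A.comul_alpha h]
    rw [subclaimR A R n (A.comul h) (A.comul x) (A.comul g)]
    have claimL : ∀ cg : H ⊗[k] H,
        freeRho A R.ν (tmul2 A.mul R.act ((A.mul (A.α.symm h) x) ⊗ₜ[k] R.ν n)
            (TensorProduct.map A.α.toLinearMap A.α.toLinearMap cg))
          = psi A R.act (tmul2 (A.mul.compl₂ A.α.toLinearMap)
              (A.mul ∘ₗ A.α.symm.toLinearMap) (A.comul h) (A.comul x)) n
              ((TensorProduct.assoc k H H H)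
                ((TensorProduct.map A.comul A.α.symm.toLinearMap) cg)) := by
      intro cg
      induction cg using TensorProduct.induction_on with
      | zero => simp
      | add c1 c2 h1 h2 => simp only [map_add, h1, h2]
      | tmul u v =>
        simp only [TensorProduct.map_tmul, tmul2_tmul, LinearEquiv.coe_coe]
        rw [freeRho_tmul, nu_symm_act, A.comul_mul, A.comul_alpha u, A.comul_mul,
          comul_alpha_symm]
        exact subclaimL A R n (A.comul h) (A.comul x) (A.comul u) v
    rw [claimL, A.hom_coassoc g]

lemma L_rho_coassoc (m : H ⊗[k] N) :
    (TensorProduct.map (LinearMap.id : H →ₗ[k] H) (freeRho A R.ν)) (freeRho A R.ν m)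
      = (TensorProduct.assoc k H H (H ⊗[k] N))
          ((TensorProduct.map
              ((TensorProduct.map A.α.toLinearMap (LinearMap.id : H →ₗ[k] H)) ∘ₗ A.comul)
              (TensorProduct.congr A.α R.ν).symm.toLinearMap) (freeRho A R.ν m)) := by
  induction m using TensorProduct.induction_on with
  | zero => simp
  | add m1 m2 h1 h2 => simp only [map_add, h1, h2]
  | tmul x n =>
    rw [freeRho_tmul]
    have claim1 : ∀ c : H ⊗[k] H,
        TensorProduct.map (LinearMap.id : H →ₗ[k] H) (freeRho A R.ν)
          (TensorProduct.map A.α.toLinearMap ((TensorProduct.mk k H N).flip (R.ν.symm n)) c)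
        = TensorProduct.map (A.α.toLinearMap ∘ₗ A.α.toLinearMap)
            (TensorProduct.map A.α.toLinearMap
              ((TensorProduct.mk k H N).flip (R.ν.symm (R.ν.symm n))))
            (TensorProduct.map A.α.symm.toLinearMap A.comul c) := by
      intro c
      induction c using TensorProduct.induction_on with
      | zero => simp
      | add c1 c2 h1 h2 => simp only [map_add, h1, h2]
      | tmul a b =>
        simp only [TensorProduct.map_tmul, LinearMap.id_apply, LinearEquiv.coe_coe,
          TensorProduct.mk_apply, LinearMap.flip_apply, LinearMap.comp_apply]
        rw [freeRho_tmul, A.α.apply_symm_apply]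
    have claim2 : ∀ c : H ⊗[k] H,
        (TensorProduct.assoc k H H (H ⊗[k] N))
          ((TensorProduct.map
              ((TensorProduct.map A.α.toLinearMap (LinearMap.id : H →ₗ[k] H)) ∘ₗ A.comul)
              (TensorProduct.congr A.α R.ν).symm.toLinearMap)
            (TensorProduct.map A.α.toLinearMap
              ((TensorProduct.mk k H N).flip (R.ν.symm n)) c))
        = TensorProduct.map (A.α.toLinearMap ∘ₗ A.α.toLinearMap)
            (TensorProduct.map A.α.toLinearMap
              ((TensorProduct.mk k H N).flip (R.ν.symm (R.ν.symm n))))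
            ((TensorProduct.assoc k H H H)
              ((TensorProduct.map A.comul A.α.symm.toLinearMap) c)) := by
      intro c
      induction c using TensorProduct.induction_on with
      | zero => simp
      | add c1 c2 h1 h2 => simp only [map_add, h1, h2]
      | tmul a b =>
        simp only [TensorProduct.map_tmul, LinearMap.id_apply, LinearEquiv.coe_coe,
          TensorProduct.mk_apply, LinearMap.flip_apply, LinearMap.comp_apply,
          TensorProduct.congr_symm_tmul]
        rw [A.comul_alpha]
        generalize A.comul a = d
        induction d using TensorProduct.induction_on with
        | zero => simp
        | add d1 d2 h1 h2 => simp only [map_add, add_tmul, tmul_add, h1, h2]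
        | tmul p q =>
          simp only [TensorProduct.map_tmul, LinearMap.id_apply, LinearEquiv.coe_coe,
            TensorProduct.assoc_tmul, TensorProduct.mk_apply, LinearMap.flip_apply,
            LinearMap.comp_apply]
    rw [claim1, claim2, A.hom_coassoc x]

end Fields2
/-- for a right Hom-module `(N,ν)`, the canonical maps turn `H ⊗ N` into
a left-covariant `(H,α)`-Hom-bimodule. -/
theorem free_left_covariant_bimodule {k H : Type*} [CommRing k] [AddCommGroup H] [Module k H]
    (A : MonHomHopf k H) {N : Type*} [AddCommGroup N] [Module k N]
    (R : RightHomMod A N) :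
    ∃ B : LeftCovBimod A (H ⊗[k] N),
      B.μ = TensorProduct.congr A.α R.ν ∧
      B.lact = freeLact A R.ν ∧
      B.ract = freeRact A R.act ∧
      B.rho = freeRho A R.ν := by
  refine ⟨{ μ := TensorProduct.congr A.α R.ν
            lact := freeLact A R.ν
            ract := freeRact A R.act
            rho := freeRho A R.ν
            lact_assoc := ?_
            lact_one := ?_
            mu_lact := ?_
            ract_assoc := ?_
            ract_one := ?_
            mu_ract := ?_
            bimod := ?_
            rho_coassoc := L_rho_coassoc A R
            rho_counit := ?_
            rho_mu := ?_
            rho_cov := fun h g m => L_rho_cov A R h g m }, rfl, rfl, rfl, rfl⟩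
  · -- lact_assoc
    intro g h m
    induction m using TensorProduct.induction_on with
    | zero => simp
    | add m1 m2 h1 h2 => simp only [map_add, h1, h2]
    | tmul x n =>
      simp only [freeLact_tmul, TensorProduct.congr_tmul, LinearEquiv.symm_apply_apply,
        alpha_symm_mul]
      congr 1
      rw [← A.hom_assoc (A.α.symm g) (A.α.symm h) x, A.α.apply_symm_apply]
  · -- lact_one
    intro m
    induction m using TensorProduct.induction_on with
    | zero => simp
    | add m1 m2 h1 h2 => simp only [map_add, h1, h2]
    | tmul x n => rw [freeLact_tmul, alpha_symm_one, A.one_mul', TensorProduct.congr_tmul]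
  · -- mu_lact
    intro h m
    induction m using TensorProduct.induction_on with
    | zero => simp
    | add m1 m2 h1 h2 => simp only [map_add, h1, h2]
    | tmul x n =>
      simp only [freeLact_tmul, TensorProduct.congr_tmul, LinearEquiv.symm_apply_apply,
        A.alpha_mul, A.α.apply_symm_apply]
  · -- ract_assoc
    intro m g h
    induction m using TensorProduct.induction_on with
    | zero => simp [freeRact_apply]
    | add m1 m2 h1 h2 => simp only [map_add, LinearMap.add_apply, h1, h2]
    | tmul x n =>
      rw [TensorProduct.congr_tmul, freeRact_apply, freeRact_apply, freeRact_apply,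
        A.comul_mul, A.comul_alpha]
      generalize A.comul g = cg
      generalize A.comul h = ch
      induction cg using TensorProduct.induction_on with
      | zero => simp
      | add c1 c2 h1 h2 => simp only [map_add, LinearMap.add_apply, h1, h2]
      | tmul u v =>
        induction ch using TensorProduct.induction_on with
        | zero => simp
        | add c1 c2 h1 h2 => simp only [map_add, LinearMap.add_apply, h1, h2]
        | tmul p q =>
          simp only [tmul2_tmul, TensorProduct.map_tmul, LinearEquiv.coe_coe]
          rw [A.hom_assoc, R.act_assoc]
  · -- ract_one
    intro m
    induction m using TensorProduct.induction_on with
    | zero => simp [freeRact_apply]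
    | add m1 m2 h1 h2 => simp only [map_add, LinearMap.add_apply, h1, h2]
    | tmul x n =>
      rw [freeRact_apply, A.comul_one, tmul2_tmul, A.mul_one', R.act_one,
        TensorProduct.congr_tmul]
  · -- mu_ract
    intro m h
    induction m using TensorProduct.induction_on with
    | zero => simp [freeRact_apply]
    | add m1 m2 h1 h2 => simp only [map_add, LinearMap.add_apply, h1, h2]
    | tmul x n =>
      rw [freeRact_apply, freeRact_apply, TensorProduct.congr_tmul, A.comul_alpha]
      generalize A.comul h = c
      induction c using TensorProduct.induction_on with
      | zero => simp
      | add c1 c2 h1 h2 => simp only [map_add, tmul_add, h1, h2]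
      | tmul u v =>
        simp only [tmul2_tmul, TensorProduct.map_tmul, TensorProduct.congr_tmul,
          LinearEquiv.coe_coe, A.alpha_mul, R.nu_act]
  · -- bimod
    intro h m g
    induction m using TensorProduct.induction_on with
    | zero => simp [freeRact_apply]
    | add m1 m2 h1 h2 => simp only [map_add, LinearMap.add_apply, h1, h2]
    | tmul x n =>
      rw [freeLact_tmul, freeRact_apply, freeRact_apply, A.comul_alpha]
      generalize A.comul g = c
      induction c using TensorProduct.induction_on with
      | zero => simp
      | add c1 c2 h1 h2 => simp only [map_add, LinearMap.add_apply, h1, h2]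
      | tmul u v =>
        simp only [tmul2_tmul, TensorProduct.map_tmul, freeLact_tmul,
          LinearEquiv.coe_coe, LinearEquiv.symm_apply_apply, R.nu_act]
        congr 1
        rw [← A.hom_assoc (A.α.symm h) x u, A.α.apply_symm_apply]
  · -- rho_counit
    intro m
    induction m using TensorProduct.induction_on with
    | zero => simp
    | add m1 m2 h1 h2 => simp only [map_add, h1, h2]
    | tmul x n =>
      rw [freeRho_tmul, TensorProduct.congr_symm_tmul, ← A.counit_comul_left x]
      generalize A.comul x = c
      induction c using TensorProduct.induction_on with
      | zero => simp
      | add c1 c2 h1 h2 => simp only [map_add, add_tmul, h1, h2]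
      | tmul a b =>
        simp only [TensorProduct.map_tmul, LinearMap.id_apply, LinearEquiv.coe_coe,
          TensorProduct.mk_apply, LinearMap.flip_apply, TensorProduct.lid_tmul,
          A.counit_alpha, TensorProduct.smul_tmul']
  · -- rho_mu
    intro m
    induction m using TensorProduct.induction_on with
    | zero => simp
    | add m1 m2 h1 h2 => simp only [map_add, h1, h2]
    | tmul x n =>
      rw [TensorProduct.congr_tmul, freeRho_tmul, freeRho_tmul, A.comul_alpha,
        LinearEquiv.symm_apply_apply]
      generalize A.comul x = c
      induction c using TensorProduct.induction_on with
      | zero => simp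
      | add c1 c2 h1 h2 => simp only [map_add, h1, h2]
      | tmul a b =>
        simp only [TensorProduct.map_tmul, LinearEquiv.coe_coe, TensorProduct.mk_apply,
          LinearMap.flip_apply, TensorProduct.congr_tmul, LinearEquiv.apply_symm_apply]
end
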